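/- Let 𝒜 = ⟨A,R⟩ be an almost bounded structure and u ∈ Uf(A). Then R^ue(u,u) holds if and only if {w ∈ A : R(w,w)} ∈ u. -/
import Mathlib


open FirstOrder Cardinal

namespace UEx

/-- Elements of infinite in- or out-degree. -/
def RInf (R : A → A → Prop) : Set A :=
  {w | {v | R w v}.Infinite ∨ {v | R v w}.Infinite}

/-- A uniform finite bound on all in- and out-degrees. -/
def Bounded (R : A → A → Prop) : Prop :=
  ∃ n : ℕ, ∀ w : A, {v | R w v}.Finite ∧ {v | R v w}.Finite ∧
    {v | R w v}.ncard ≤ n ∧ {v | R v w}.ncard ≤ n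

/-- Almost bounded: finitely many elements of infinite degree, and a uniform
finite bound on the degrees of the remaining elements. -/
def AlmostBounded (R : A → A → Prop) : Prop :=
  (RInf R).Finite ∧ ∃ n : ℕ, ∀ w ∉ RInf R,
    {v | R w v}.ncard ≤ n ∧ {v | R v w}.ncard ≤ n

/-- P = {(s,t) ∈ R : s ∈ R∞ or t ∈ R∞}. -/
def PRel (R : A → A → Prop) (s t : A) : Prop := R s t ∧ (s ∈ RInf R ∨ t ∈ RInf R)

/-- S = R \ P. -/
def SRel (R : A → A → Prop) (s t : A) : Prop := R s t ∧ ¬(s ∈ RInf R ∨ t ∈ RInf R)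

/-- The ultrafilter extension of a binary relation. -/
def ueRel (Q : A → A → Prop) (u v : Ultrafilter A) : Prop :=
  ∀ X ∈ v, {w | ∃ s ∈ X, Q w s} ∈ u
lemma exists_coloring {A : Type*} (d : ℕ) (N : A → Set A)
    (hfin : ∀ w, (N w).Finite) (hcard : ∀ w, (N w).ncard ≤ d)
    (hsym : ∀ w v, v ∈ N w → w ∈ N v) :
    ∃ c : A → Fin (d+1), ∀ w v, v ∈ N w → v ≠ w → c v ≠ c w := by
  classical
  let r : A → A → Prop := WellOrderingRel
  have wf : WellFounded r := (IsWellFounded.wf)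
  let F : ∀ w : A, (∀ v, r v w → Fin (d+1)) → Finset (Fin (d+1)) := fun w ih =>
    ((hfin w).toFinset.attach).image
      (fun v => if h : r v.1 w then ih v.1 h else ⟨0, Nat.succ_pos d⟩)
  have hFcard : ∀ w ih, (F w ih).card ≤ d := by
    intro w ih
    calc (F w ih).card ≤ (hfin w).toFinset.attach.card := Finset.card_image_le
    _ = (hfin w).toFinset.card := Finset.card_attach
    _ = (N w).ncard := (Set.ncard_eq_toFinset_card _ (hfin w)).symm
    _ ≤ d := hcard w
  have hne : ∀ w ih, (Finset.univ \ F w ih).Nonempty := by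
    intro w ih
    rw [← Finset.card_pos, Finset.card_sdiff_of_subset (Finset.subset_univ _), Finset.card_univ,
      Fintype.card_fin]
    have := hFcard w ih
    omega
  let pick : ∀ w : A, (∀ v, r v w → Fin (d+1)) → Fin (d+1) := fun w ih =>
    (Finset.univ \ F w ih).min' (hne w ih)
  let c : A → Fin (d+1) := wf.fix pick
  have hc : ∀ w, c w = pick w (fun v _ => c v) := fun w => wf.fix_eq pick w
  have key : ∀ w v, r v w → v ∈ N w → c v ≠ c w := by
    intro w v hr hv
    have hcw : c w ∈ Finset.univ \ F w (fun v _ => c v) := by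
      rw [hc w]; exact Finset.min'_mem _ _
    have hcv : c v ∈ F w (fun v _ => c v) := by
      apply Finset.mem_image.mpr
      refine ⟨⟨v, (hfin w).mem_toFinset.mpr hv⟩, Finset.mem_attach _ _, ?_⟩
      simp [hr]
    intro e
    rw [e] at hcv
    exact (Finset.mem_sdiff.mp hcw).2 hcv
  refine ⟨c, fun w v hv hne' => ?_⟩
  rcases trichotomous_of r v w with h1 | h1 | h1
  · exact key w v h1 hv
  · exact absurd h1 hne'
  · exact fun e => key v w h1 (hsym w v hv) e.symm

/-- Observation: if `𝒜 = ⟨A,R⟩` is almost bounded, then `R^ue(u,u)` iff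
`{w : R(w,w)} ∈ u`. -/
theorem ueRel_self_iff {A : Type*} (R : A → A → Prop)
    (h : AlmostBounded R) (u : Ultrafilter A) :
    ueRel R u u ↔ {w | R w w} ∈ u := by
  classical
  constructor
  · intro hR
    by_contra hD
    have hDc : {w | R w w}ᶜ ∈ u := Ultrafilter.compl_mem_iff_notMem.mpr hD
    by_cases hp : ∃ a, u = pure a
    · obtain ⟨a, rfl⟩ := hp
      have h1 := hR {a} (by simp)
      have h2 : ∃ s ∈ ({a} : Set A), R a s := h1
      obtain ⟨s, hs, hras⟩ := h2
      rw [Set.mem_singleton_iff] at hs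
      subst hs
      exact hDc hras
    · have hnofin : ∀ s : Set A, s.Finite → s ∉ u := by
        intro s hs hsu
        obtain ⟨a, _, ha⟩ := Ultrafilter.eq_pure_of_finite_mem hs hsu
        exact hp ⟨a, ha⟩
      obtain ⟨hFin, n, hn⟩ := h
      have hC : (RInf R)ᶜ ∈ u := Ultrafilter.compl_mem_iff_notMem.mpr (hnofin _ hFin)
      set N : A → Set A := fun w => {v | v ≠ w ∧ (SRel R w v ∨ SRel R v w)} with hNdef
      have hsub : ∀ w, N w ⊆ {v | R w v} ∪ {v | R v w} := by
        rintro w v ⟨-, h1 | h1⟩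
        · exact Or.inl h1.1
        · exact Or.inr h1.1
      have hNempty : ∀ w ∈ RInf R, N w = ∅ := by
        intro w hw
        ext v
        simp only [hNdef, Set.mem_setOf_eq, Set.mem_empty_iff_false, iff_false]
        rintro ⟨-, h1 | h1⟩
        · exact h1.2 (Or.inl hw)
        · exact h1.2 (Or.inr hw)
      have hfin : ∀ w, (N w).Finite := by
        intro w
        by_cases hw : w ∈ RInf R
        · rw [hNempty w hw]; exact Set.finite_empty
        · refine Set.Finite.subset (Set.Finite.union ?_ ?_) (hsub w) <;>
            · rw [← Set.not_infinite]
              intro hinf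
              exact hw (by first | exact Or.inl hinf | exact Or.inr hinf)
      have hufin : ∀ w, w ∉ RInf R → ({v | R w v} ∪ {v | R v w}).Finite := by
        intro w hw
        refine Set.Finite.union ?_ ?_ <;>
          · rw [← Set.not_infinite]
            intro hinf
            exact hw (by first | exact Or.inl hinf | exact Or.inr hinf)
      have hcard : ∀ w, (N w).ncard ≤ 2 * n := by
        intro w
        by_cases hw : w ∈ RInf R
        · rw [hNempty w hw]; simp
        · calc (N w).ncard ≤ ({v | R w v} ∪ {v | R v w}).ncard :=
                Set.ncard_le_ncard (hsub w) (hufin w hw)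
          _ ≤ {v | R w v}.ncard + {v | R v w}.ncard := Set.ncard_union_le _ _
          _ ≤ n + n := Nat.add_le_add (hn w hw).1 (hn w hw).2
          _ = 2 * n := by ring
      have hsym : ∀ w v, v ∈ N w → w ∈ N v := by
        rintro w v ⟨hne, h1⟩
        exact ⟨fun e => hne e.symm, h1.symm⟩
      obtain ⟨c, hcol⟩ := exists_coloring (2 * n) N hfin hcard hsym
      obtain ⟨i, hi⟩ := Ultrafilter.eq_pure_of_finite (Ultrafilter.map c u)
      have hfib : c ⁻¹' {i} ∈ u := by
        have : {i} ∈ Ultrafilter.map c u := by rw [hi]; simp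
        exact this
      set X : Set A := c ⁻¹' {i} ∩ ((RInf R)ᶜ ∩ {w | R w w}ᶜ) with hXdef
      have hX : X ∈ u := Filter.inter_mem hfib (Filter.inter_mem hC hDc)
      have h2 := hR X hX
      have h3 : ({w | ∃ s ∈ X, R w s} ∩ X) ∈ u := Filter.inter_mem h2 hX
      obtain ⟨w, ⟨s, hsX, hws⟩, hwX⟩ := Ultrafilter.nonempty_of_mem h3
      have hsw : s ≠ w := by
        rintro rfl
        exact hwX.2.2 hws
      have hsN : s ∈ N w := by
        refine ⟨hsw, Or.inl ⟨hws, ?_⟩⟩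
        rintro (h1 | h1)
        · exact hwX.2.1 h1
        · exact hsX.2.1 h1
      exact hcol w s hsN hsw (hsX.1.trans hwX.1.symm)
  · intro hD X hX
    have h1 : X ∩ {w | R w w} ∈ u := Filter.inter_mem hX hD
    exact Filter.mem_of_superset h1 (fun w hw => ⟨w, hw.1, hw.2⟩)

end UEx
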